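/- arXiv:2203.04484 — 2 statements merged into one kernel-verified Lean document; each statement's English description precedes it below -/
import Mathlib

section
/- For all real numbers x > 0 and y > 0, the determinant of the 4-by-4 matrix [[5,5,2,x],[2,5,5,2],[1,4,5,5],[y,1,2,5]] is strictly negative. -/
theorem det_tp_obstruction_witness (x y : ℝ) :
    (!![5, 5, 2, x; 2, 5, 5, 2; 1, 4, 5, 5; y, 1, 2, 5] :
      Matrix (Fin 4) (Fin 4) ℝ).det = -(5 * x * y + x + 41 * y + 1) := by
  simp [Matrix.det_succ_row_zero, Fin.sum_univ_succ, Fin.succAbove]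
  ring

/-- For all real x > 0 and y > 0, the determinant of
[[5,5,2,x],[2,5,5,2],[1,4,5,5],[y,1,2,5]] is strictly negative. -/
theorem stmt_4 (x y : ℝ) (hx : 0 < x) (hy : 0 < y) :
    (!![5, 5, 2, x; 2, 5, 5, 2; 1, 4, 5, 5; y, 1, 2, 5] :
      Matrix (Fin 4) (Fin 4) ℝ).det < 0 := by
  rw [det_tp_obstruction_witness, neg_neg_iff_pos]
  positivity
end

section
/- For all real numbers α ≥ 0, β ≥ 0, and f ≥ 0, the determinant of the 3-by-3 matrix [[1, 1, 1/(1+α)], [1, 1+α, 1], [f, (1+α)/(1+β), 1]] equals αβ/(1+β), and in particular is nonnegative. -/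
/-- For α, β, f ≥ 0, det [[1,1,1/(1+α)],[1,1+α,1],[f,(1+α)/(1+β),1]]
equals αβ/(1+β), and in particular is nonnegative. -/
theorem stmt_6 (α β f : ℝ) (hα : 0 ≤ α) (hβ : 0 ≤ β) (hf : 0 ≤ f) :
    (!![1, 1, 1 / (1 + α); 1, 1 + α, 1; f, (1 + α) / (1 + β), 1] :
      Matrix (Fin 3) (Fin 3) ℝ).det = α * β / (1 + β) ∧
    0 ≤ (!![1, 1, 1 / (1 + α); 1, 1 + α, 1; f, (1 + α) / (1 + β), 1] :
      Matrix (Fin 3) (Fin 3) ℝ).det := by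
  have hα1 : (1 : ℝ) + α ≠ 0 := by positivity
  have hβ1 : (1 : ℝ) + β ≠ 0 := by positivity
  have hd : (!![1, 1, 1 / (1 + α); 1, 1 + α, 1; f, (1 + α) / (1 + β), 1] :
      Matrix (Fin 3) (Fin 3) ℝ).det = α * β / (1 + β) := by
    rw [Matrix.det_fin_three]
    simp [Matrix.vecHead, Matrix.vecTail]
    field_simp
    ring
  exact ⟨hd, hd ▸ by positivity⟩
end
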